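/- For every real ι > 0 such that ι/β is not an integer, the crawl value function V is differentiable at ι with derivative V'(ι) = μ̃·α·exp(−αι)·ψ(ι). -/

import Mathlib

/-! The floor of `ι/β` is locally constant at `ι`, so near `ι` both `w` and `ψ` are sums with a
fixed number of terms. Since `R_i'(x) = e^{-x} x^i / i!` and `ν = γ e^{-αβ}`, the `i`-th term of
`w'` equals `e^{-αι}` times the `i`-th term of `ψ'`. Hence `w' = e^{-αι} ψ'`, and
`V' = μ̃ (w' + α e^{-αι} ψ - e^{-αι} ψ') = μ̃ α e^{-αι} ψ`. -/

open Real Finset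

/-- Normalized residual of the `i`-th Taylor approximation of the exponential:
`R_i(x) = (exp x − ∑_{j=0}^{i} x^j/j!) / exp x`. -/
noncomputable def Rres (i : ℕ) (x : ℝ) : ℝ :=
  (Real.exp x - ∑ j ∈ Finset.range (i + 1), x ^ j / (Nat.factorial j : ℝ)) / Real.exp x

/-- Expected crawl-interval length `ψ(ι) = ∑_{i=0}^{⌊ι/β⌋} (1/γ)·R_i(γ(ι − iβ))`. -/
noncomputable def psi (γ β : ℝ) (ι : ℝ) : ℝ :=
  ∑ i ∈ Finset.range (⌊ι / β⌋₊ + 1), (1 / γ) * Rres i (γ * (ι - (i : ℝ) * β))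

/-- Expected cumulative freshness `w(ι) = ∑_{i=0}^{⌊ι/β⌋} (ν^i/(Δ+ν)^{i+1})·R_i((α+γ)(ι − iβ))`. -/
noncomputable def wfun (α β γ ν Δ : ℝ) (ι : ℝ) : ℝ :=
  ∑ i ∈ Finset.range (⌊ι / β⌋₊ + 1),
    (ν ^ i / (Δ + ν) ^ (i + 1)) * Rres i ((α + γ) * (ι - (i : ℝ) * β))

/-- Crawl value function `V(ι) = μ̃·(w(ι) − exp(−αι)·ψ(ι))`. -/
noncomputable def Vfun (μ α β γ ν Δ : ℝ) (ι : ℝ) : ℝ :=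
  μ * (wfun α β γ ν Δ ι - Real.exp (-(α * ι)) * psi γ β ι)

open Filter Topology Nat

theorem Int.floor_eventuallyEq {α : Type*} [Ring α] [LinearOrder α] [IsStrictOrderedRing α]
    [FloorRing α] [TopologicalSpace α] [OrderTopology α] {x : α} (h : x ≠ ⌊x⌋) :
    ∀ᶠ y in 𝓝 x, ⌊y⌋ = ⌊x⌋ :=
  mem_of_superset (Ico_mem_nhds ((Int.floor_le x).lt_of_ne h.symm) (Int.lt_floor_add_one x))
    fun y hy => Int.floor_eq_on_Ico _ y hy

theorem Nat.floor_eventuallyEq {α : Type*} [Ring α] [LinearOrder α] [IsStrictOrderedRing α]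
    [FloorRing α] [TopologicalSpace α] [OrderTopology α] {x : α} (h : x ≠ ⌊x⌋) :
    ∀ᶠ y in 𝓝 x, ⌊y⌋₊ = ⌊x⌋₊ :=
  (Int.floor_eventuallyEq h).mono fun y hy => by rw [← Int.floor_toNat, hy, Int.floor_toNat]

theorem Rres_zero (x : ℝ) : Rres 0 x = 1 - exp (-x) := by
  simp [Rres, sub_div, exp_neg]

theorem Rres_succ (i : ℕ) (x : ℝ) :
    Rres (i + 1) x = Rres i x - exp (-x) * (x ^ (i + 1) / (i + 1)!) := by
  rw [Rres, Rres, sum_range_succ, exp_neg]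
  field_simp
  ring

theorem hasDerivAt_pow_succ_div_factorial (i : ℕ) (x : ℝ) :
    HasDerivAt (fun y : ℝ => y ^ (i + 1) / (i + 1)!) (x ^ i / i !) x :=
  ((hasDerivAt_pow (i + 1) x).div_const _).congr_deriv <| by
    rw [Nat.factorial_succ]
    push_cast
    field_simp

theorem hasDerivAt_Rres (i : ℕ) (x : ℝ) :
    HasDerivAt (Rres i) (exp (-x) * x ^ i / i !) x := by
  have hexp : HasDerivAt (fun y => exp (-y)) (-exp (-x)) x := by
    simpa using (hasDerivAt_neg x).exp
  induction i with
  | zero =>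
    rw [funext Rres_zero]
    simpa using hexp.const_sub 1
  | succ i ih =>
    rw [funext (Rres_succ i)]
    refine (ih.sub (hexp.mul (hasDerivAt_pow_succ_div_factorial i x))).congr_deriv ?_
    rw [Nat.factorial_succ]
    push_cast
    field_simp
    ring

theorem hasDerivAt_Rres_mul_sub (i : ℕ) (k c x : ℝ) :
    HasDerivAt (fun y => Rres i (k * (y - c)))
      (k * (exp (-(k * (x - c))) * (k * (x - c)) ^ i / i !)) x := by
  have hin : HasDerivAt (fun y : ℝ => k * (y - c)) k x := by
    simpa using ((hasDerivAt_id x).sub_const c).const_mul k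
  exact ((hasDerivAt_Rres i (k * (x - c))).comp x hin).congr_deriv (mul_comm _ _)

noncomputable def psiPartial (γ β : ℝ) (n : ℕ) (x : ℝ) : ℝ :=
  ∑ i ∈ range (n + 1), (1 / γ) * Rres i (γ * (x - i * β))

noncomputable def wPartial (α β γ ν Δ : ℝ) (n : ℕ) (x : ℝ) : ℝ :=
  ∑ i ∈ range (n + 1), (ν ^ i / (Δ + ν) ^ (i + 1)) * Rres i ((α + γ) * (x - i * β))

section
variable {α β γ ν Δ : ℝ}

theorem hasDerivAt_psiPartial (hγ : γ ≠ 0) (n : ℕ) (x : ℝ) :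
    HasDerivAt (psiPartial γ β n)
      (∑ i ∈ range (n + 1), exp (-(γ * (x - i * β))) * (γ * (x - i * β)) ^ i / i !) x :=
  HasDerivAt.fun_sum fun i _ =>
    ((hasDerivAt_Rres_mul_sub i γ (i * β) x).const_mul (1 / γ)).congr_deriv (by field_simp)

theorem hasDerivAt_wPartial (hαγ : α + γ ≠ 0) (hrates : α + γ = Δ + ν)
    (hnu : ν = γ * exp (-(α * β))) (n : ℕ) (x : ℝ) :
    HasDerivAt (wPartial α β γ ν Δ n) (exp (-(α * x)) *
      ∑ i ∈ range (n + 1), exp (-(γ * (x - i * β))) * (γ * (x - i * β)) ^ i / i !) x := by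
  rw [mul_sum]
  refine HasDerivAt.fun_sum fun i _ =>
    ((hasDerivAt_Rres_mul_sub i (α + γ) (i * β) x).const_mul _).congr_deriv ?_
  have hexp : exp (-(α * β)) ^ i * exp (-((α + γ) * (x - i * β))) =
      exp (-(α * x)) * exp (-(γ * (x - i * β))) := by
    rw [← exp_nat_mul, ← exp_add, ← exp_add]
    ring_nf
  rw [← hrates, hnu, mul_pow, mul_pow, mul_pow, pow_succ]
  simp only [mul_comm (i : ℝ) β] at hexp ⊢
  field_simp
  linear_combination γ ^ i * (x - i * β) ^ i * hexp

end

theorem stmt_9_general (μ α β γ ν Δ : ℝ) (hα : 0 < α) (hγ : 0 < γ)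
    (hrates : α + γ = Δ + ν) (hnu : ν = γ * Real.exp (-(α * β)))
    (ι : ℝ) (hnotint : ∀ k : ℤ, ι / β ≠ (k : ℝ)) :
    HasDerivAt (Vfun μ α β γ ν Δ) (μ * α * Real.exp (-(α * ι)) * psi γ β ι) ι := by
  set n := ⌊ι / β⌋₊
  have hfloor : ∀ᶠ y in 𝓝 ι, ⌊y / β⌋₊ = n :=
    (continuous_id.div_const β).continuousAt.eventually (Nat.floor_eventuallyEq (hnotint _))
  have hV : Vfun μ α β γ ν Δ =ᶠ[𝓝 ι]
      fun y => μ * (wPartial α β γ ν Δ n y - exp (-(α * y)) * psiPartial γ β n y) :=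
    hfloor.mono fun y hy => by simp only [Vfun, wfun, psi, wPartial, psiPartial, hy]
  have hexp : HasDerivAt (fun y => exp (-(α * y))) (exp (-(α * ι)) * -α) ι := by
    simpa using ((hasDerivAt_id ι).const_mul α).neg.exp
  refine ((((hasDerivAt_wPartial (by positivity) hrates hnu n ι).sub
    (hexp.mul (hasDerivAt_psiPartial hγ.ne' n ι))).const_mul μ).congr_of_eventuallyEq
      hV).congr_deriv ?_
  simp only [psi, psiPartial]
  ring

/-- For every real `ι > 0` such that `ι/β` is not an integer, the crawl value function `V` is
differentiable at `ι` with derivative `V'(ι) = μ̃·α·exp(−αι)·ψ(ι)`. -/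
theorem stmt_9 (μ α β γ ν Δ : ℝ) (hμ : 0 < μ) (hα : 0 < α) (hβ : 0 < β) (hγ : 0 < γ)
    (hν : 0 < ν) (hΔ : 0 < Δ) (hrates : α + γ = Δ + ν) (hnu : ν = γ * Real.exp (-(α * β)))
    (ι : ℝ) (hι : 0 < ι) (hnotint : ∀ k : ℤ, ι / β ≠ (k : ℝ)) :
    HasDerivAt (Vfun μ α β γ ν Δ) (μ * α * Real.exp (-(α * ι)) * psi γ β ι) ι :=
  stmt_9_general μ α β γ ν Δ hα hγ hrates hnu ι hnotint
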